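/- arXiv:1302.5269 — 3 statements merged into one kernel-verified Lean document; each statement's English description precedes it below -/
import Mathlib

section
/- For every real l > 0 and every complex k with k² not of the form ((2n-1)π/(2l))² for any positive integer n and k ≠ 0, the series (1/l) ∑_{n=1}^∞ 1/(((2n-1)π/(2l))² - k²) converges and equals tan(kl)/(2k). -/
/-!
Since `tan z = -cot (z - π / 2)`, the claim is a rescaling of the Mittag-Leffler expansion
`π cot (π y) = 1 / y + ∑ₙ (1 / (y - n) + 1 / (y + n))` at `y = z / π - 1 / 2`, whose poles are
exactly the zeros of `cos z`. Regrouping its terms as `1 / (y - n) + 1 / (y + n + 1)` only changes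
the `N`-th partial sum by `1 / (y - N) → 0`, and this regrouped series, after the substitution
`z = k l`, is the series `∑ 1 / (((2n+1)π/(2l))² - k²)` up to the factor `2 k / l`.
-/

open Filter Topology
open scoped Real

namespace Complex

lemma sum_range_inv_sub_add_inv_add_one (y : ℂ) (N : ℕ) :
    ∑ n ∈ Finset.range N, (1 / (y - n) + 1 / (y + n + 1)) =
      1 / y + ∑ n ∈ Finset.range N, cotTerm y n - 1 / (y - N) := by
  induction N with
  | zero => simp
  | succ N ih =>
    rw [Finset.sum_range_succ, Finset.sum_range_succ, ih, cotTerm]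
    push_cast
    ring

lemma summable_inv_sub_add_inv_add_one {y : ℂ} (hy : y ∈ integerComplement) :
    Summable fun n : ℕ ↦ 1 / (y - n) + 1 / (y + n + 1) := by
  have hodd : Function.Injective fun n : ℕ ↦ (2 * n + 1 : ℤ) := fun a b h ↦ by
    simp only at h; omega
  -- the terms are the odd-indexed ones of `m ↦ 4 (2y + 1) / ((2y + 1 - m) (2y + 1 + m))`
  refine (((EisensteinSeries.summable_linear_sub_mul_linear_add (2 * y + 1) 1 1).comp_injective
    hodd).mul_left (4 * (2 * y + 1))).congr fun n ↦ ?_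
  have h1 : y - n ≠ 0 := by simpa [sub_eq_add_neg] using integerComplement_add_ne_zero hy (-n)
  have h2 : y + n + 1 ≠ 0 := by simpa [add_assoc] using integerComplement_add_ne_zero hy (n + 1)
  have hden : ((((1 : ℤ) : ℂ) * (2 * y + 1) - ((2 * n + 1 : ℤ) : ℂ)) *
      (((1 : ℤ) : ℂ) * (2 * y + 1) + ((2 * n + 1 : ℤ) : ℂ))) = 4 * ((y - n) * (y + n + 1)) := by
    push_cast; ring
  simp only [Function.comp_apply, hden]
  field_simp
  ring

lemma hasSum_inv_sub_add_inv_add_one {y : ℂ} (hy : y ∈ integerComplement) :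
    HasSum (fun n : ℕ ↦ 1 / (y - n) + 1 / (y + n + 1)) (π * cot (π * y)) := by
  rw [(summable_inv_sub_add_inv_add_one hy).hasSum_iff_tendsto_nat]
  have hinv : Tendsto (fun N : ℕ ↦ 1 / (y - N)) atTop (𝓝 0) := by
    simpa only [one_div, Function.comp_def] using tendsto_inv₀_cobounded.comp
      ((tendsto_const_sub_cobounded y).comp tendsto_natCast_atTop_cobounded)
  have hcot := ((tendsto_logDeriv_euler_cot_sub hy).const_add (1 / y)).sub hinv
  simp only [add_sub_cancel, sub_zero] at hcot
  simpa only [sum_range_inv_sub_add_inv_add_one] using hcot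

lemma tan_eq_neg_cot_sub_pi_div_two (z : ℂ) : tan z = -cot (z - π / 2) := by
  rw [tan_eq_sin_div_cos, cot_eq_cos_div_sin, cos_sub_pi_div_two, sin_sub_pi_div_two, div_neg,
    neg_neg]

lemma hasSum_tan {z : ℂ} (hz : cos z ≠ 0) :
    HasSum (fun n : ℕ ↦ 2 * z / (((2 * n + 1) * π / 2) ^ 2 - z ^ 2)) (tan z) := by
  have hπ : (π : ℂ) ≠ 0 := ofReal_ne_zero.2 Real.pi_ne_zero
  set y := z / π - 1 / 2 with hy_def
  have hz_eq : z = π * (y + 1 / 2) := by rw [hy_def]; field_simp; ring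
  have hy : y ∈ integerComplement := by
    rintro ⟨m, hm⟩
    exact hz (cos_eq_zero_iff.2 ⟨m, by rw [hz_eq, ← hm]; ring⟩)
  have hval : -1 / π * (π * cot (π * y)) = tan z := by
    rw [tan_eq_neg_cot_sub_pi_div_two, show z - π / 2 = π * y by rw [hz_eq]; ring]
    field_simp
  have hsum := (hasSum_inv_sub_add_inv_add_one hy).mul_left (-1 / π : ℂ)
  rw [hval] at hsum
  refine hsum.congr_fun fun n ↦ ?_
  have h1 : y - n ≠ 0 := by simpa [sub_eq_add_neg] using integerComplement_add_ne_zero hy (-n)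
  have h2 : y + n + 1 ≠ 0 := by simpa [add_assoc] using integerComplement_add_ne_zero hy (n + 1)
  have hden : ((2 * n + 1) * π / 2) ^ 2 - z ^ 2 = -π ^ 2 * ((y - n) * (y + n + 1)) := by
    rw [hz_eq]; ring
  rw [hden, hz_eq]
  field_simp
  ring

lemma cos_ne_zero_of_forall_sq_ne {z : ℂ}
    (h : ∀ n : ℕ, 1 ≤ n → z ^ 2 ≠ ((2 * n - 1) * π / 2) ^ 2) : cos z ≠ 0 := by
  intro hz
  obtain ⟨m, rfl⟩ := cos_eq_zero_iff.1 hz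
  rcases le_or_gt 0 m with hm | hm
  · lift m to ℕ using hm
    exact h (m + 1) (by omega) (by push_cast; ring)
  · obtain ⟨n, rfl⟩ : ∃ n : ℕ, m = -n := ⟨m.natAbs, by omega⟩
    exact h n (by omega) (by push_cast; ring)

end Complex

open Complex in
/-- For `l > 0` and `k ∈ ℂ`, `k ≠ 0`, with `k²` avoiding the Dirichlet eigenvalues
`((2n-1)π/(2l))²`, the series `(1/l) ∑_{n≥1} 1/(((2n-1)π/(2l))² - k²)` converges to
`tan(kl)/(2k)`. -/
theorem greens_function_series (l : ℝ) (hl : 0 < l) (k : ℂ) (hk : k ≠ 0)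
    (hk2 : ∀ n : ℕ, 1 ≤ n →
      k ^ 2 ≠ ((2 * (n : ℂ) - 1) * (Real.pi : ℂ) / (2 * (l : ℂ))) ^ 2) :
    HasSum
      (fun n : ℕ =>
        (1 / (l : ℂ)) *
          (1 / (((2 * ((n : ℂ) + 1) - 1) * (Real.pi : ℂ) / (2 * (l : ℂ))) ^ 2 - k ^ 2)))
      (Complex.tan (k * (l : ℂ)) / (2 * k)) := by
  have hl0 : (l : ℂ) ≠ 0 := ofReal_ne_zero.2 hl.ne'
  have hcos : cos (k * l) ≠ 0 := cos_ne_zero_of_forall_sq_ne fun n hn heq ↦ hk2 n hn <| by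
    field_simp
    linear_combination 4 * heq
  refine ((hasSum_tan hcos).div_const (2 * k)).congr_fun fun n ↦ ?_
  have hden : ((2 * n + 1) * π / 2) ^ 2 - (k * l) ^ 2 =
      l ^ 2 * (((2 * ((n : ℂ) + 1) - 1) * π / (2 * l)) ^ 2 - k ^ 2) := by
    field_simp
    ring
  rw [hden]
  field_simp
end

section
/- There is no unitary (1+M)×(1+M) complex matrix U (with block decomposition U = [[u₁, U₂],[U₃, U₄]] where u₁ is a scalar, U₂ a 1×M row, U₃ an M×1 column, U₄ an M×M block) such that the effective scalar coupling ũ(k) = u₁ - (1-k) U₂ ((1-k) U₄ - (k+1) I)⁻¹ U₃ satisfies ũ(k) = -(4π + k)/(4π - k) for all k in some nonempty open subset of ℂ where both sides are defined. -/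
/-!
Write `c = 4π` and `A(k) = (1 - k) U₄ - (k + 1) I`. By the Schur complement,
`det A(k) * ((c - k) * ũ(k) + c + k)` is the determinant of a bordered matrix whose entries are
polynomials in `k`; it vanishes on `V` by hypothesis, hence identically. At `k = c` it equals
`2c * det A(c)`, so `U₄` has the eigenvalue `(c + 1) / (1 - c)`, of modulus `> 1` because `c > 1`.
But `U₄` is a block of a unitary matrix, hence a contraction.
-/

open Matrix Polynomial
open scoped ComplexOrder

namespace Matrix
variable {𝕜 m n : Type*} [RCLike 𝕜] [Fintype m] [Fintype n] [DecidableEq m] [DecidableEq n]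

theorem star_mulVec_dotProduct_mulVec_le_of_fromBlocks_mem_unitaryGroup
    {A : Matrix m m 𝕜} {B : Matrix m n 𝕜} {C : Matrix n m 𝕜} {D : Matrix n n 𝕜}
    (hU : fromBlocks A B C D ∈ unitaryGroup (m ⊕ n) 𝕜) (v : n → 𝕜) :
    star (D *ᵥ v) ⬝ᵥ (D *ᵥ v) ≤ star v ⬝ᵥ v := by
  have hisometry : star (fromBlocks A B C D *ᵥ Sum.elim 0 v) ⬝ᵥ (fromBlocks A B C D *ᵥ Sum.elim 0 v)
      = star (Sum.elim 0 v : m ⊕ n → 𝕜) ⬝ᵥ Sum.elim 0 v := by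
    rw [star_mulVec, dotProduct_mulVec, vecMul_vecMul, ← star_eq_conjTranspose,
      Unitary.star_mul_self_of_mem hU, vecMul_one]
  simp only [fromBlocks_mulVec, Sum.elim_comp_inl, Sum.elim_comp_inr, mulVec_zero, zero_add,
    Function.star_sumElim, star_zero, sumElim_dotProduct_sumElim, dotProduct_zero] at hisometry
  rw [← hisometry]
  exact le_add_of_nonneg_left (dotProduct_star_self_nonneg _)

theorem norm_le_one_of_mulVec_eq_smul_of_fromBlocks_mem_unitaryGroup
    {A : Matrix m m 𝕜} {B : Matrix m n 𝕜} {C : Matrix n m 𝕜} {D : Matrix n n 𝕜}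
    (hU : fromBlocks A B C D ∈ unitaryGroup (m ⊕ n) 𝕜) {μ : 𝕜} {v : n → 𝕜} (hv : v ≠ 0)
    (hDv : D *ᵥ v = μ • v) : ‖μ‖ ≤ 1 := by
  have h := star_mulVec_dotProduct_mulVec_le_of_fromBlocks_mem_unitaryGroup hU v
  rw [hDv, star_smul, smul_dotProduct, dotProduct_smul, smul_smul, smul_eq_mul,
    RCLike.star_def, RCLike.conj_mul] at h
  have hpos : 0 < star v ⬝ᵥ v := dotProduct_star_self_pos_iff.mpr hv
  have hμ : ((‖μ‖ ^ 2 : ℝ) : 𝕜) ≤ 1 := le_of_mul_le_mul_right (by simpa using h) hpos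
  rw [← RCLike.ofReal_one, RCLike.ofReal_le_ofReal] at hμ
  exact (sq_le_one_iff₀ (norm_nonneg μ)).mp hμ

theorem det_fromBlocks_of_isUnit {R : Type*} [CommRing R] (a : R) (b c : n → R)
    {D : Matrix n n R} (hD : IsUnit D) :
    (fromBlocks (of fun _ _ => a) (of fun _ j => b j) (of fun i _ => c i) D :
        Matrix (Fin 1 ⊕ n) (Fin 1 ⊕ n) R).det
      = D.det * (a - ∑ i, ∑ j, b i * D⁻¹ i j * c j) := by
  have := hD.invertible
  rw [det_fromBlocks₂₂, invOf_eq_nonsing_inv, det_fin_one]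
  simp only [sub_apply, of_apply, mul_apply, Finset.sum_mul]
  rw [Finset.sum_comm]

theorem exists_mulVec_eq_smul_of_det_eq_zero {K : Type*} [Field K] {D : Matrix n n K}
    {α β : K} (hα : α ≠ 0) (h : (α • D - β • (1 : Matrix n n K)).det = 0) :
    ∃ v ≠ 0, D *ᵥ v = (β / α) • v := by
  obtain ⟨v, hv, hDv⟩ := exists_mulVec_eq_zero_iff.mpr h
  refine ⟨v, hv, ?_⟩
  rw [sub_mulVec, smul_mulVec, smul_mulVec, one_mulVec, sub_eq_zero] at hDv
  rw [div_eq_inv_mul, mul_smul, ← hDv, smul_smul, inv_mul_cancel₀ hα, one_smul]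

theorem det_map_eval_eq_zero_of_isOpen {𝕜 n : Type*} [NontriviallyNormedField 𝕜]
    [Fintype n] [DecidableEq n] (P : Matrix n n 𝕜[X]) {V : Set 𝕜} (hV : IsOpen V)
    (hne : V.Nonempty) (h : ∀ k ∈ V, (P.map (eval k)).det = 0) (z : 𝕜) :
    (P.map (eval z)).det = 0 := by
  have eval_det : ∀ k, (P.map (eval k)).det = P.det.eval k := fun k =>
    ((evalRingHom k).map_det P).symm
  obtain ⟨k₀, hk₀⟩ := hne
  have hP : P.det = 0 := eq_zero_of_infinite_isRoot _ <|
    (infinite_of_mem_nhds k₀ (hV.mem_nhds hk₀)).mono fun k hk => by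
      simpa [IsRoot, eval_det] using h k hk
  rw [eval_det, hP, eval_zero]

end Matrix

namespace Complex

theorem one_lt_norm_add_one_div_one_sub {r : ℝ} (hr : 1 < r) :
    1 < ‖((r : ℂ) + 1) / (1 - r)‖ := by
  rw [← ofReal_one, ← ofReal_add, ← ofReal_sub, ← ofReal_div, norm_real, Real.norm_eq_abs,
    abs_div, one_lt_div (abs_pos.mpr (by linarith)), abs_of_neg (by linarith),
    abs_of_pos (by linarith)]
  linarith

end Complex

section CouplingPencil

variable {R n : Type*} [CommRing R] [DecidableEq n]

noncomputable def couplingPencil (c u₁ : R) (U₂ U₃ : n → R) (U₄ : Matrix n n R) :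
    Matrix (Fin 1 ⊕ n) (Fin 1 ⊕ n) R[X] :=
  fromBlocks (of fun _ _ => (C c - X) * C u₁ + C c + X)
    (of fun _ j => (C c - X) * (1 - X) * C (U₂ j)) (of fun i _ => C (U₃ i))
    ((1 - X : R[X]) • U₄.map C - (X + 1 : R[X]) • 1)

theorem couplingPencil_map_eval (c u₁ : R) (U₂ U₃ : n → R) (U₄ : Matrix n n R) (k : R) :
    (couplingPencil c u₁ U₂ U₃ U₄).map (eval k) =
      fromBlocks (of fun _ _ => (c - k) * u₁ + c + k)
        (of fun _ j => (c - k) * (1 - k) * U₂ j) (of fun i _ => U₃ i)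
        ((1 - k) • U₄ - (k + 1) • 1) := by
  ext (i | i) (j | j) <;> simp [couplingPencil, one_apply, apply_ite (eval k)]

variable [Fintype n]

theorem det_couplingPencil_map_eval_of_isUnit (c u₁ : R) (U₂ U₃ : n → R) (U₄ : Matrix n n R)
    {k : R} (hA : IsUnit ((1 - k) • U₄ - (k + 1) • (1 : Matrix n n R))) :
    ((couplingPencil c u₁ U₂ U₃ U₄).map (eval k)).det =
      ((1 - k) • U₄ - (k + 1) • (1 : Matrix n n R)).det *
        ((c - k) * (u₁ - (1 - k) * ∑ i, ∑ j,
          U₂ i * ((1 - k) • U₄ - (k + 1) • (1 : Matrix n n R))⁻¹ i j * U₃ j) + c + k) := by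
  rw [couplingPencil_map_eval, det_fromBlocks_of_isUnit _ _ _ hA]
  simp only [mul_assoc, ← Finset.mul_sum]
  ring

theorem det_couplingPencil_map_eval_self (c u₁ : R) (U₂ U₃ : n → R) (U₄ : Matrix n n R) :
    ((couplingPencil c u₁ U₂ U₃ U₄).map (eval c)).det =
      (c + c) * ((1 - c) • U₄ - (c + 1) • (1 : Matrix n n R)).det := by
  rw [couplingPencil_map_eval]
  simp only [sub_self, zero_mul, zero_add]
  rw [show (of fun _ _ => 0 : Matrix (Fin 1) n R) = 0 from rfl, det_fromBlocks_zero₁₂,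
    det_fin_one, of_apply]

end CouplingPencil

theorem no_unitary_effective_coupling_upper_general (M : ℕ)
    (u₁ : ℂ) (U₂ U₃ : Fin M → ℂ) (U₄ : Matrix (Fin M) (Fin M) ℂ)
    (hU : Matrix.fromBlocks (Matrix.of fun _ _ => u₁) (Matrix.of fun _ j => U₂ j)
        (Matrix.of fun i _ => U₃ i) U₄ ∈ Matrix.unitaryGroup (Fin 1 ⊕ Fin M) ℂ) :
    ¬ ∃ V : Set ℂ, IsOpen V ∧ V.Nonempty ∧
      (∀ k ∈ V, IsUnit ((1 - k) • U₄ - (k + 1) • (1 : Matrix (Fin M) (Fin M) ℂ)) ∧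
        (4 * (Real.pi : ℂ) - k) ≠ 0) ∧
      ∀ k ∈ V,
        u₁ - (1 - k) * ∑ i, ∑ j,
            U₂ i * (((1 - k) • U₄ - (k + 1) • (1 : Matrix (Fin M) (Fin M) ℂ))⁻¹ i j) * U₃ j
          = -((4 * (Real.pi : ℂ) + k) / (4 * (Real.pi : ℂ) - k)) := by
  rintro ⟨V, hV, hne, hdef, heq⟩
  set c : ℂ := 4 * (Real.pi : ℂ) with hc
  have hvanish : ∀ k ∈ V, ((couplingPencil c u₁ U₂ U₃ U₄).map (eval k)).det = 0 := by
    intro k hk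
    obtain ⟨hA, hck⟩ := hdef k hk
    rw [det_couplingPencil_map_eval_of_isUnit _ _ _ _ _ hA, heq k hk]
    field_simp
    ring
  have hsingular : ((1 - c) • U₄ - (c + 1) • (1 : Matrix (Fin M) (Fin M) ℂ)).det = 0 := by
    have h := det_map_eval_eq_zero_of_isOpen _ hV hne hvanish c
    rw [det_couplingPencil_map_eval_self] at h
    exact (mul_eq_zero.mp h).resolve_left (by simp [hc, Real.pi_ne_zero])
  have hc_real : c = ((4 * Real.pi : ℝ) : ℂ) := by push_cast; rfl
  have hc1 : 1 < 4 * Real.pi := by linarith [Real.pi_gt_three]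
  rw [hc_real] at hsingular
  obtain ⟨v, hv, hU₄v⟩ := exists_mulVec_eq_smul_of_det_eq_zero
    (sub_ne_zero.mpr (by exact_mod_cast hc1.ne)) hsingular
  exact (Complex.one_lt_norm_add_one_div_one_sub hc1).not_ge
    (norm_le_one_of_mulVec_eq_smul_of_fromBlocks_mem_unitaryGroup hU hv hU₄v)

/-- No unitary `(1+M)×(1+M)` matrix `U = [[u₁,U₂],[U₃,U₄]]` produces the effective
coupling `ũ(k) = u₁ - (1-k) U₂ ((1-k)U₄ - (k+1)I)⁻¹ U₃` equal to `-(4π+k)/(4π-k)`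
on a nonempty open set where both sides are defined. -/
theorem no_unitary_effective_coupling_upper (M : ℕ) (hM : 1 ≤ M)
    (u₁ : ℂ) (U₂ U₃ : Fin M → ℂ) (U₄ : Matrix (Fin M) (Fin M) ℂ)
    (hU : Matrix.fromBlocks (Matrix.of fun _ _ => u₁) (Matrix.of fun _ j => U₂ j)
        (Matrix.of fun i _ => U₃ i) U₄ ∈ Matrix.unitaryGroup (Fin 1 ⊕ Fin M) ℂ) :
    ¬ ∃ V : Set ℂ, IsOpen V ∧ V.Nonempty ∧
      (∀ k ∈ V, IsUnit ((1 - k) • U₄ - (k + 1) • (1 : Matrix (Fin M) (Fin M) ℂ)) ∧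
        (4 * (Real.pi : ℂ) - k) ≠ 0) ∧
      ∀ k ∈ V,
        u₁ - (1 - k) * ∑ i, ∑ j,
            U₂ i * (((1 - k) • U₄ - (k + 1) • (1 : Matrix (Fin M) (Fin M) ℂ))⁻¹ i j) * U₃ j
          = -((4 * (Real.pi : ℂ) + k) / (4 * (Real.pi : ℂ) - k)) :=
  no_unitary_effective_coupling_upper_general M u₁ U₂ U₃ U₄ hU
end

section
/- Let U be a unitary (1+M)×(1+M) complex matrix with block form [[u₁, U₂],[U₃, U₄]] (u₁ scalar), and for real k let ũ(k) = u₁ - (1-k) U₂ ((1-k)U₄ - (k+1)I)⁻¹ U₃. Then |ũ(k)| ≤ 1 for all real k at which (1-k)U₄ - (k+1)I is invertible and |(1-k)/(1+k)| ≤ 1, i.e. for k ≥ 0. -/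
open Matrix Complex


/-- For a unitary block matrix `U = [[u₁,U₂],[U₃,U₄]]`, the effective coupling
`ũ(k) = u₁ - (1-k) U₂ ((1-k)U₄ - (k+1)I)⁻¹ U₃` satisfies `|ũ(k)| ≤ 1` for every real
`k ≥ 0` at which `(1-k)U₄ - (k+1)I` is invertible. -/

theorem effective_coupling_contractive (M : ℕ) (hM : 1 ≤ M)
    (u₁ : ℂ) (U₂ U₃ : Fin M → ℂ) (U₄ : Matrix (Fin M) (Fin M) ℂ)
    (hU : Matrix.fromBlocks (Matrix.of fun _ _ => u₁) (Matrix.of fun _ j => U₂ j)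
        (Matrix.of fun i _ => U₃ i) U₄ ∈ Matrix.unitaryGroup (Fin 1 ⊕ Fin M) ℂ)
    (k : ℝ) (hk : 0 ≤ k)
    (hinv : IsUnit ((1 - (k : ℂ)) • U₄ - ((k : ℂ) + 1) • (1 : Matrix (Fin M) (Fin M) ℂ))) :
    ‖(u₁ - (1 - (k : ℂ)) * ∑ i, ∑ j,
          U₂ i *
            (((1 - (k : ℂ)) • U₄ - ((k : ℂ) + 1) • (1 : Matrix (Fin M) (Fin M) ℂ))⁻¹ i j) *
            U₃ j)‖ ≤ 1 := by
  set A : Matrix (Fin M) (Fin M) ℂ := (1 - (k:ℂ)) • U₄ - ((k:ℂ) + 1) • 1 with hA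
  set h : Fin M → ℂ := A⁻¹ *ᵥ U₃ with hh
  have hAh : A *ᵥ h = U₃ := by
    rw [hh, Matrix.mulVec_mulVec,
      Matrix.mul_nonsing_inv _ ((Matrix.isUnit_iff_isUnit_det A).mp hinv), Matrix.one_mulVec]
  have hAh' : ∀ i, (1-(k:ℂ)) * (U₄ *ᵥ h) i - ((k:ℂ)+1) * h i = U₃ i := by
    intro i
    have := congrFun hAh i
    simpa [hA, Matrix.sub_mulVec, Matrix.smul_mulVec, Matrix.one_mulVec] using this
  set t : ℂ := u₁ - (1 - (k:ℂ)) * ∑ i, ∑ j, U₂ i * (A⁻¹ i j) * U₃ j with ht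
  set v : Fin 1 ⊕ Fin M → ℂ := Sum.elim (fun _ => (1:ℂ)) (fun i => -(1-(k:ℂ)) * h i) with hv
  set Uf := Matrix.fromBlocks (Matrix.of fun _ _ => u₁) (Matrix.of fun _ j => U₂ j)
        (Matrix.of fun i _ => U₃ i) U₄ with hUf
  have hw : Uf *ᵥ v = Sum.elim (fun _ => t) (fun i => -((k:ℂ)+1) * h i) := by
    funext x
    cases x with
    | inl a =>
      simp [hUf, hv, Matrix.fromBlocks_mulVec, Matrix.mulVec, dotProduct, ht, hh,
        Finset.mul_sum, Finset.sum_mul, mul_assoc]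
      ring_nf
      simp only [show ∀ (a b c : ℂ), a * (k:ℂ) * b * c - a*b*c = -((1-(k:ℂ))*a*b*c) from
        fun a b c => by ring, Finset.sum_neg_distrib, ← sub_eq_add_neg]
      exact congrArg _ (Finset.sum_congr rfl fun _ _ => Finset.sum_congr rfl fun _ _ => by ring)
    | inr i =>
      have hU4 : ∑ j, U₄ i j * h j = (U₄ *ᵥ h) i := rfl
      simp only [hUf, hv, Matrix.mulVec, dotProduct, Fintype.sum_sum_type,
        Matrix.fromBlocks_apply₂₁, Matrix.fromBlocks_apply₂₂, Sum.elim_inl, Sum.elim_inr,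
        Matrix.of_apply, Fin.sum_univ_one, mul_one]
      rw [show (∑ j, U₄ i j * (-(1-(k:ℂ)) * h j)) = -(1-(k:ℂ)) * ∑ j, U₄ i j * h j by
        rw [Finset.mul_sum]; exact Finset.sum_congr rfl fun j _ => by ring]
      rw [hU4]
      linear_combination -(hAh' i)
  have hunit : star Uf * Uf = 1 := hU.1
  have hnorm : star (Uf *ᵥ v) ⬝ᵥ (Uf *ᵥ v) = star v ⬝ᵥ v := by
    rw [Matrix.star_mulVec, Matrix.dotProduct_mulVec, Matrix.vecMul_vecMul,
      ← Matrix.star_eq_conjTranspose, hunit, Matrix.vecMul_one]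
  rw [hw] at hnorm
  set S : ℝ := ∑ i, Complex.normSq (h i) with hS
  have conjmul : ∀ z : ℂ, (starRingEnd ℂ) z * z = (Complex.normSq z : ℂ) := fun z => by
    rw [mul_comm, Complex.mul_conj]
  have hcast : ((k:ℂ)+1) = ((k+1:ℝ):ℂ) := by push_cast; ring
  have hcast2 : (1-(k:ℂ)) = ((1-k:ℝ):ℂ) := by push_cast; ring
  have dot_elim : ∀ (a : ℂ) (g : Fin M → ℂ),
      star (Sum.elim (fun _ : Fin 1 => a) g) ⬝ᵥ (Sum.elim (fun _ => a) g)
      = ((Complex.normSq a + ∑ i, Complex.normSq (g i) : ℝ) : ℂ) := by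
    intro a g
    rw [dotProduct, Fintype.sum_sum_type]
    simp only [Pi.star_apply, Sum.elim_inl, Sum.elim_inr, RCLike.star_def, conjmul,
      Fin.sum_univ_one]
    push_cast
    ring
  rw [hv, dot_elim, dot_elim] at hnorm
  have hre' : Complex.normSq t + ∑ i, Complex.normSq (-((k:ℂ)+1) * h i)
      = Complex.normSq 1 + ∑ i, Complex.normSq (-(1-(k:ℂ)) * h i) :=
    Complex.ofReal_inj.mp hnorm
  have e1 : ∀ i, Complex.normSq (-((k:ℂ)+1) * h i) = (k+1)^2 * Complex.normSq (h i) := by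
    intro i
    rw [Complex.normSq_mul, Complex.normSq_neg, hcast, Complex.normSq_ofReal]; ring
  have e2 : ∀ i, Complex.normSq (-(1-(k:ℂ)) * h i) = (1-k)^2 * Complex.normSq (h i) := by
    intro i
    rw [Complex.normSq_mul, Complex.normSq_neg, hcast2, Complex.normSq_ofReal]; ring
  simp only [e1, e2, Complex.normSq_one, ← Finset.mul_sum, ← hS] at hre'
  have hre : Complex.normSq t + (k+1)^2 * S = 1 + (1-k)^2 * S := hre'
  have hSpos : 0 ≤ S := Finset.sum_nonneg fun i _ => Complex.normSq_nonneg _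
  have hns : Complex.normSq t ≤ 1 := by nlinarith
  calc ‖t‖ = Real.sqrt (Complex.normSq t) := by rw [Complex.norm_def]
    _ ≤ Real.sqrt 1 := Real.sqrt_le_sqrt hns
    _ = 1 := Real.sqrt_one
end
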